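/- arXiv:1703.10347 — 2 statements merged into one kernel-verified Lean document; each statement's English description precedes it below -/
import Mathlib

section
/- Let k ≥ 3 be an integer. For every ε > 0 there exists a constant A > 0 such that for all real X ≥ 2, |V_k² ∫_0^∞ (⌊t⌋^{k/2} − t^{k/2})² e^{−t/X} dt − (k² V_k² Γ(k−1)/12) X^{k−1}| ≤ A X^{k−2+ε}, where ⌊t⌋ denotes the greatest integer ≤ t. -/
/-!
Write `p = k / 2`, `q = 2p - 2`, `a = ⌊t⌋` and `{t} = t - a`. Convexity of `x ↦ x ^ p` squeezes
`t ^ p - a ^ p` between `p a ^ (p - 1) {t}` and `p t ^ (p - 1) {t}`, so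
`(a ^ p - t ^ p) ^ 2 = p ^ 2 t ^ q {t} ^ 2 + O(t ^ (q - 1))`. Freezing the weight
`t ^ q e ^ (-t / X)` at `a` costs `O((t ^ (q - 1) + t ^ q / X) e ^ (-t / X))`, and the frozen
term `a ^ q e ^ (-a / X) ({t} ^ 2 - 1 / 3)` integrates to zero over every unit interval.
What is left is the main term `p ^ 2 / 3 ∫ t ^ q e ^ (-t / X) = p ^ 2 / 3 Γ(q + 1) X ^ (q + 1)`,
and the error terms are Gamma integrals of size `O(X ^ q) = O(X ^ (k - 2))`.
-/

open scoped Real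

/-- `rk k m` = number of ways to write `m` as a sum of `k` integer squares. -/
noncomputable def rk (k m : ℕ) : ℕ :=
  Nat.card {v : Fin k → ℤ // (∑ i, (v i) ^ 2) = (m : ℤ)}

/-- `Sk k t` = number of lattice points of `ℤ^k` in the closed ball of radius `√t`. -/
noncomputable def Sk (k : ℕ) (t : ℝ) : ℕ :=
  Nat.card {v : Fin k → ℤ // (∑ i, ((v i : ℝ)) ^ 2) ≤ t}

/-- `Vk k` = volume of the unit ball in `ℝ^k`. -/
noncomputable def Vk (k : ℕ) : ℝ :=
  Real.pi ^ ((k : ℝ) / 2) / Real.Gamma ((k : ℝ) / 2 + 1)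

/-- `Pk k t` = lattice point discrepancy of the `k`-dimensional ball of radius `√t`. -/
noncomputable def Pk (k : ℕ) (t : ℝ) : ℝ :=
  (Sk k t : ℝ) - Vk k * t ^ ((k : ℝ) / 2)

/-- Value of the (analytically continued) Riemann zeta function at a real point. -/
noncomputable def rzeta (x : ℝ) : ℝ := (riemannZeta (x : ℂ)).re

/-- The Riemann zeta function with its 2-factor removed. -/
noncomputable def rzeta2 (x : ℝ) : ℝ := (1 - (2 : ℝ) ^ (-x)) * rzeta x

/-- The constant `C_k` for `k ≥ 4`. -/
noncomputable def Ck (k : ℕ) : ℝ :=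
  ((k : ℝ) ^ 2 / 24) * (Vk k) ^ 2 +
    Real.pi ^ (k : ℝ) * rzeta ((k : ℝ) - 2) * (1 + (2 : ℝ) ^ ((3 : ℝ) - (k : ℝ))) /
      (12 * (Real.Gamma ((k : ℝ) / 2)) ^ 2 * rzeta2 (k : ℝ))

open Real MeasureTheory Set

theorem rpow_sub_rpow_mem_Icc {q a t : ℝ} (hq : 1 ≤ q) (ha : 0 ≤ a) (hat : a ≤ t) :
    t ^ q - a ^ q ∈ Icc (q * a ^ (q - 1) * (t - a)) (q * t ^ (q - 1) * (t - a)) := by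
  rcases hat.eq_or_lt with rfl | hlt
  · simp
  have hconv := convexOn_rpow hq
  have hderiv : ∀ x : ℝ, HasDerivAt (fun y : ℝ => y ^ q) (q * x ^ (q - 1)) x :=
    fun x => hasDerivAt_rpow_const (Or.inr hq)
  have ha' : a ∈ Ici (0 : ℝ) := ha
  have ht' : t ∈ Ici (0 : ℝ) := ha.trans hat
  have hlow := hconv.le_slope_of_hasDerivAt ha' ht' hlt (hderiv a)
  have hupp := hconv.slope_le_of_hasDerivAt ha' ht' hlt (hderiv t)
  rw [slope_def_field, le_div_iff₀ (sub_pos.2 hlt)] at hlow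
  rw [slope_def_field, div_le_iff₀ (sub_pos.2 hlt)] at hupp
  exact ⟨hlow, hupp⟩

theorem rpow_sub_rpow_le_of_le_add_one {q a t : ℝ} (hq : 1 ≤ q) (ha : 0 ≤ a) (hat : a ≤ t)
    (hta : t ≤ a + 1) : t ^ q - a ^ q ≤ q * t ^ (q - 1) := by
  have hC : 0 ≤ q * t ^ (q - 1) := mul_nonneg (by linarith) (rpow_nonneg (ha.trans hat) _)
  exact (rpow_sub_rpow_mem_Icc hq ha hat).2.trans (mul_le_of_le_one_right hC (by linarith))

theorem abs_rpow_sub_rpow_sq_sub_le {p a t : ℝ} (hp : 3 / 2 ≤ p) (ha : 0 ≤ a) (hat : a ≤ t)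
    (hta : t ≤ a + 1) :
    |(a ^ p - t ^ p) ^ 2 - p ^ 2 * t ^ (2 * p - 2) * (t - a) ^ 2|
      ≤ p ^ 2 * (2 * p - 2) * t ^ (2 * p - 3) := by
  have ht : 0 ≤ t := ha.trans hat
  have hsq : ∀ x : ℝ, 0 ≤ x → (p * x ^ (p - 1) * (t - a)) ^ 2
      = p ^ 2 * x ^ (2 * p - 2) * (t - a) ^ 2 := fun x hx => by
    rw [mul_pow, mul_pow, ← rpow_mul_natCast hx]; ring_nf
  obtain ⟨hlow, hupp⟩ := rpow_sub_rpow_mem_Icc (by linarith : 1 ≤ p) ha hat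
  have hlow0 : 0 ≤ p * a ^ (p - 1) * (t - a) :=
    mul_nonneg (mul_nonneg (by linarith) (rpow_nonneg ha _)) (sub_nonneg.2 hat)
  have hlow2 := pow_le_pow_left₀ hlow0 hlow 2
  have hupp2 := pow_le_pow_left₀ (hlow0.trans hlow) hupp 2
  rw [hsq a ha] at hlow2
  rw [hsq t ht] at hupp2
  have hgrowth := rpow_sub_rpow_le_of_le_add_one (by linarith : 1 ≤ 2 * p - 2) ha hat hta
  rw [show 2 * p - 2 - 1 = 2 * p - 3 by ring] at hgrowth
  have hgap : 0 ≤ t ^ (2 * p - 2) - a ^ (2 * p - 2) :=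
    sub_nonneg.2 (rpow_le_rpow ha hat (by linarith))
  have hta2 : (t - a) ^ 2 ≤ 1 := by nlinarith
  have hmain : p ^ 2 * t ^ (2 * p - 2) * (t - a) ^ 2 - p ^ 2 * a ^ (2 * p - 2) * (t - a) ^ 2
      ≤ p ^ 2 * (2 * p - 2) * t ^ (2 * p - 3) := by
    rw [← mul_sub_right_distrib, ← mul_sub, mul_assoc, mul_assoc]
    refine mul_le_mul_of_nonneg_left ?_ (sq_nonneg p)
    exact (mul_le_of_le_one_right hgap hta2).trans hgrowth
  rw [show (a ^ p - t ^ p) ^ 2 = (t ^ p - a ^ p) ^ 2 by ring, abs_le]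
  constructor <;> linarith

theorem abs_rpow_mul_exp_sub_le {q X a t : ℝ} (hq : 1 ≤ q) (hX : 1 ≤ X) (ha : 0 ≤ a)
    (hat : a ≤ t) (hta : t ≤ a + 1) :
    |t ^ q * exp (-t / X) - a ^ q * exp (-a / X)|
      ≤ (q * t ^ (q - 1) + 2 * t ^ q / X) * exp (-t / X) := by
  have ht : 0 ≤ t := ha.trans hat
  have hX0 : 0 < X := by linarith
  have hpow := rpow_sub_rpow_le_of_le_add_one hq ha hat hta
  have hpow0 : 0 ≤ t ^ q - a ^ q := sub_nonneg.2 (rpow_le_rpow ha hat (by linarith))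
  have hexp : exp (-a / X) = exp (-t / X) * exp ((t - a) / X) := by
    rw [← exp_add]; ring_nf
  have hs : |(t - a) / X| ≤ 1 / X := by
    rw [abs_div, abs_of_pos hX0]
    exact div_le_div_of_nonneg_right (abs_le.2 ⟨by linarith, by linarith⟩) hX0.le
  have hdecay : |exp ((t - a) / X) - 1| ≤ 2 / X :=
    calc |exp ((t - a) / X) - 1| ≤ 2 * |(t - a) / X| :=
          abs_exp_sub_one_le (hs.trans (by rwa [div_le_one hX0]))
      _ ≤ 2 * (1 / X) := by gcongr
      _ = 2 / X := by ring
  have haq : |a ^ q| ≤ t ^ q := by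
    rw [abs_of_nonneg (rpow_nonneg ha q)]; linarith
  have he := exp_pos (-t / X)
  rw [hexp, show t ^ q * exp (-t / X) - a ^ q * (exp (-t / X) * exp ((t - a) / X))
      = ((t ^ q - a ^ q) - a ^ q * (exp ((t - a) / X) - 1)) * exp (-t / X) by ring,
    abs_mul, abs_of_pos he]
  refine mul_le_mul_of_nonneg_right ?_ he.le
  calc |(t ^ q - a ^ q) - a ^ q * (exp ((t - a) / X) - 1)|
      ≤ |t ^ q - a ^ q| + |a ^ q| * |exp ((t - a) / X) - 1| := by
        rw [← abs_mul]; exact abs_sub _ _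
    _ ≤ q * t ^ (q - 1) + t ^ q * (2 / X) := by
        rw [abs_of_nonneg hpow0]
        gcongr
    _ = q * t ^ (q - 1) + 2 * t ^ q / X := by ring

theorem integrableOn_rpow_mul_exp_neg_div {s X : ℝ} (hs : -1 < s) (hX : 0 < X) :
    IntegrableOn (fun t : ℝ => t ^ s * exp (-t / X)) (Ioi 0) := by
  have h := integrableOn_rpow_mul_exp_neg_mul_rpow hs zero_lt_one (inv_pos.2 hX)
  refine h.congr_fun (fun t _ => ?_) measurableSet_Ioi
  simp only [rpow_one, neg_mul, inv_mul_eq_div, neg_div]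

theorem integral_rpow_mul_exp_neg_div {s X : ℝ} (hs : -1 < s) (hX : 0 < X) :
    ∫ t in Ioi 0, t ^ s * exp (-t / X) = Gamma (s + 1) * X ^ (s + 1) := by
  have h := integral_rpow_mul_exp_neg_mul_Ioi (by linarith : 0 < s + 1) (inv_pos.2 hX)
  simp only [add_sub_cancel_right, one_div, inv_inv, inv_mul_eq_div, ← neg_div] at h
  rw [h, mul_comm]

theorem hasSum_integral_Ico_natCast {f : ℝ → ℝ} (hf : IntegrableOn f (Ioi 0)) :
    HasSum (fun n : ℕ => ∫ t in Ico (n : ℝ) (n + 1), f t) (∫ t in Ioi 0, f t) := by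
  have hcover : ⋃ n : ℕ, Ico (n : ℝ) (n + 1) = Ici 0 := by
    ext x
    simp only [mem_iUnion, mem_Ico, mem_Ici]
    exact ⟨fun ⟨n, hn, _⟩ => (Nat.cast_nonneg n).trans hn,
      fun hx => ⟨⌊x⌋₊, Nat.floor_le hx, Nat.lt_floor_add_one x⟩⟩
  have hdisj : Pairwise (Function.onFun Disjoint fun n : ℕ => Ico (n : ℝ) (n + 1)) := by
    intro i j hij
    simpa using pairwise_disjoint_Ico_intCast ℝ (by exact_mod_cast hij : (i : ℤ) ≠ j)
  rw [← integral_Ici_eq_integral_Ioi, ← hcover]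
  refine hasSum_integral_iUnion (fun _ => measurableSet_Ico) hdisj ?_
  rwa [hcover, integrableOn_Ici_iff_integrableOn_Ioi]

theorem setIntegral_Ico_floor_mul_fract (g : ℤ → ℝ) (ψ : ℝ → ℝ) (n : ℤ) :
    ∫ t in Ico (n : ℝ) (n + 1), g ⌊t⌋ * ψ (Int.fract t) = g n * ∫ x in (0 : ℝ)..1, ψ x := by
  have hshift : EqOn (fun t => g ⌊t⌋ * ψ (Int.fract t)) (fun t => g n * ψ (t - n))
      (Ioo (n : ℝ) (n + 1)) := fun t ht => by
    have hfloor : ⌊t⌋ = n := Int.floor_eq_iff.2 ⟨ht.1.le, ht.2⟩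
    simp only [← Int.self_sub_floor t, hfloor]
  rw [integral_Ico_eq_integral_Ioo, setIntegral_congr_fun measurableSet_Ioo hshift,
    integral_const_mul, ← integral_Ioc_eq_integral_Ioo,
    ← intervalIntegral.integral_of_le (by linarith), intervalIntegral.integral_comp_sub_right]
  simp

theorem integral_Ioi_floor_mul_fract_eq_zero (g : ℤ → ℝ) {ψ : ℝ → ℝ}
    (hψ : ∫ x in (0 : ℝ)..1, ψ x = 0)
    (hint : IntegrableOn (fun t => g ⌊t⌋ * ψ (Int.fract t)) (Ioi 0)) :
    ∫ t in Ioi 0, g ⌊t⌋ * ψ (Int.fract t) = 0 := by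
  have h := hasSum_integral_Ico_natCast hint
  simp only [← Int.cast_natCast (R := ℝ), setIntegral_Ico_floor_mul_fract, hψ, mul_zero] at h
  exact h.unique hasSum_zero

theorem intervalIntegral_sq_sub_third : ∫ x in (0 : ℝ)..1, (x ^ 2 - 1 / 3) = 0 := by
  norm_num [integral_pow]

theorem abs_rpow_sub_rpow_sq_mul_exp_sub_le {p X a t : ℝ} (hp : 3 / 2 ≤ p) (hX : 1 ≤ X)
    (ha : 0 ≤ a) (hat : a ≤ t) (hta : t ≤ a + 1) :
    |(a ^ p - t ^ p) ^ 2 * exp (-t / X) - p ^ 2 / 3 * (t ^ (2 * p - 2) * exp (-t / X))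
        - p ^ 2 * (a ^ (2 * p - 2) * exp (-a / X) * ((t - a) ^ 2 - 1 / 3))|
      ≤ 2 * p ^ 2 * (((2 * p - 2) * t ^ (2 * p - 3) + 2 * t ^ (2 * p - 2) / X) * exp (-t / X)) := by
  have ht : 0 ≤ t := ha.trans hat
  have he := exp_pos (-t / X)
  have hsq := abs_rpow_sub_rpow_sq_sub_le hp ha hat hta
  have hweight := abs_rpow_mul_exp_sub_le (by linarith : 1 ≤ 2 * p - 2) hX ha hat hta
  rw [show 2 * p - 2 - 1 = 2 * p - 3 by ring] at hweight
  have hsaw : |(t - a) ^ 2 - 1 / 3| ≤ 1 := abs_le.2 ⟨by nlinarith, by nlinarith⟩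
  have hslack : 0 ≤ 2 * t ^ (2 * p - 2) / X * exp (-t / X) := by positivity
  have h1 : |((a ^ p - t ^ p) ^ 2 - p ^ 2 * t ^ (2 * p - 2) * (t - a) ^ 2) * exp (-t / X)|
      ≤ p ^ 2 * (((2 * p - 2) * t ^ (2 * p - 3) + 2 * t ^ (2 * p - 2) / X) * exp (-t / X)) := by
    rw [abs_mul, abs_of_pos he]
    calc _ ≤ p ^ 2 * (2 * p - 2) * t ^ (2 * p - 3) * exp (-t / X) :=
          mul_le_mul_of_nonneg_right hsq he.le
      _ ≤ _ := by
          rw [add_mul, mul_add, ← mul_assoc, ← mul_assoc]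
          exact le_add_of_nonneg_right (mul_nonneg (sq_nonneg p) hslack)
  have h2 : |p ^ 2 * ((t ^ (2 * p - 2) * exp (-t / X) - a ^ (2 * p - 2) * exp (-a / X))
        * ((t - a) ^ 2 - 1 / 3))|
      ≤ p ^ 2 * (((2 * p - 2) * t ^ (2 * p - 3) + 2 * t ^ (2 * p - 2) / X) * exp (-t / X)) := by
    rw [abs_mul, abs_mul, abs_of_nonneg (sq_nonneg p)]
    refine mul_le_mul_of_nonneg_left ?_ (sq_nonneg p)
    simpa using mul_le_mul hweight hsaw (abs_nonneg _) ((abs_nonneg _).trans hweight)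
  calc _ = |((a ^ p - t ^ p) ^ 2 - p ^ 2 * t ^ (2 * p - 2) * (t - a) ^ 2) * exp (-t / X)
          + p ^ 2 * ((t ^ (2 * p - 2) * exp (-t / X) - a ^ (2 * p - 2) * exp (-a / X))
            * ((t - a) ^ 2 - 1 / 3))| := by congr 1; ring
    _ ≤ _ := (abs_add_le _ _).trans (by linarith)

theorem abs_rpow_mul_exp_mul_sub_third_le {q X a t : ℝ} (hq : 1 ≤ q) (hX : 1 ≤ X) (ha : 0 ≤ a)
    (hat : a ≤ t) (hta : t ≤ a + 1) :
    |a ^ q * exp (-a / X) * ((t - a) ^ 2 - 1 / 3)|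
      ≤ t ^ q * exp (-t / X) + (q * t ^ (q - 1) + 2 * t ^ q / X) * exp (-t / X) := by
  have hsaw : |(t - a) ^ 2 - 1 / 3| ≤ 1 := abs_le.2 ⟨by nlinarith, by nlinarith⟩
  have hweight := abs_rpow_mul_exp_sub_le hq hX ha hat hta
  have hφt : |t ^ q * exp (-t / X)| = t ^ q * exp (-t / X) :=
    abs_of_nonneg (mul_nonneg (rpow_nonneg (ha.trans hat) _) (exp_pos _).le)
  have hφa := abs_sub_abs_le_abs_sub (a ^ q * exp (-a / X)) (t ^ q * exp (-t / X))
  rw [abs_sub_comm] at hφa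
  calc _ ≤ |a ^ q * exp (-a / X)| * 1 := by
        rw [abs_mul]; exact mul_le_mul_of_nonneg_left hsaw (abs_nonneg _)
    _ ≤ _ := by linarith

theorem integrableOn_rpow_sub_one_add_rpow_div_mul_exp {q X : ℝ} (hq : 0 < q) (hX : 0 < X) :
    IntegrableOn (fun t : ℝ => (q * t ^ (q - 1) + 2 * t ^ q / X) * exp (-t / X)) (Ioi 0) := by
  have h := ((integrableOn_rpow_mul_exp_neg_div (s := q - 1) (by linarith) hX).const_mul q).add
    ((integrableOn_rpow_mul_exp_neg_div (s := q) (by linarith) hX).const_mul (2 / X))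
  exact IntegrableOn.congr_fun h (fun t _ => by simp only [Pi.add_apply]; ring) measurableSet_Ioi

theorem integral_rpow_sub_one_add_rpow_div_mul_exp {q X : ℝ} (hq : 0 < q) (hX : 0 < X) :
    ∫ t in Ioi 0, (q * t ^ (q - 1) + 2 * t ^ q / X) * exp (-t / X)
      = 3 * Gamma (q + 1) * X ^ q := by
  have hsplit : ∀ t : ℝ, (q * t ^ (q - 1) + 2 * t ^ q / X) * exp (-t / X)
      = q * (t ^ (q - 1) * exp (-t / X)) + 2 / X * (t ^ q * exp (-t / X)) := fun t => by ring
  simp only [hsplit]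
  rw [integral_add ((integrableOn_rpow_mul_exp_neg_div (by linarith) hX).const_mul _)
      ((integrableOn_rpow_mul_exp_neg_div (by linarith) hX).const_mul _),
    integral_const_mul, integral_const_mul, integral_rpow_mul_exp_neg_div (by linarith) hX,
    integral_rpow_mul_exp_neg_div (by linarith) hX, sub_add_cancel, Gamma_add_one hq.ne',
    rpow_add_one hX.ne']
  field_simp
  ring

theorem integrableOn_floor_rpow_mul_exp_mul_fract_sq_sub_third {q X : ℝ} (hq : 1 ≤ q)
    (hX : 1 ≤ X) :
    IntegrableOn (fun t => (⌊t⌋ : ℝ) ^ q * exp (-⌊t⌋ / X) * (Int.fract t ^ 2 - 1 / 3)) (Ioi 0) := by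
  have hX0 : 0 < X := by linarith
  refine Integrable.mono' ((integrableOn_rpow_mul_exp_neg_div (s := q) (by linarith) hX0).add
      (integrableOn_rpow_sub_one_add_rpow_div_mul_exp (q := q) (by linarith) hX0))
    (by fun_prop : Measurable _).aestronglyMeasurable
    ((ae_restrict_iff' measurableSet_Ioi).2 (ae_of_all _ fun t ht => ?_))
  simpa only [Int.fract, Real.norm_eq_abs, Pi.add_apply] using
    abs_rpow_mul_exp_mul_sub_third_le hq hX (by exact_mod_cast Int.floor_nonneg.2 (le_of_lt ht))
      (Int.floor_le t) (Int.lt_floor_add_one t).le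

theorem integral_Ioi_floor_rpow_mul_exp_mul_fract_sq_sub_third {q X : ℝ} (hq : 1 ≤ q)
    (hX : 1 ≤ X) :
    ∫ t in Ioi 0, (⌊t⌋ : ℝ) ^ q * exp (-⌊t⌋ / X) * (Int.fract t ^ 2 - 1 / 3) = 0 :=
  integral_Ioi_floor_mul_fract_eq_zero (fun n : ℤ => (n : ℝ) ^ q * exp (-n / X))
    (ψ := fun x => x ^ 2 - 1 / 3) intervalIntegral_sq_sub_third
    (integrableOn_floor_rpow_mul_exp_mul_fract_sq_sub_third hq hX)

theorem abs_integral_floor_rpow_sub_rpow_sq_sub_le {p X : ℝ} (hp : 3 / 2 ≤ p) (hX : 1 ≤ X) :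
    |(∫ t in Ioi 0, ((⌊t⌋ : ℝ) ^ p - t ^ p) ^ 2 * exp (-t / X))
        - p ^ 2 / 3 * (Gamma (2 * p - 1) * X ^ (2 * p - 1))|
      ≤ 6 * p ^ 2 * Gamma (2 * p - 1) * X ^ (2 * p - 2) := by
  have hX0 : 0 < X := by linarith
  set q := 2 * p - 2
  set φ : ℝ → ℝ := fun t => t ^ q * exp (-t / X) with hφ_def
  set G : ℝ → ℝ := fun t => φ ⌊t⌋ * (Int.fract t ^ 2 - 1 / 3) with hG_def
  set D : ℝ → ℝ := fun t => ((⌊t⌋ : ℝ) ^ p - t ^ p) ^ 2 * exp (-t / X) - p ^ 2 / 3 * φ t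
    - p ^ 2 * G t with hD_def
  have hφ : IntegrableOn φ (Ioi 0) := integrableOn_rpow_mul_exp_neg_div (by linarith) hX0
  have hweight := integrableOn_rpow_sub_one_add_rpow_div_mul_exp (q := q) (by linarith) hX0
  have hG : IntegrableOn G (Ioi 0) :=
    integrableOn_floor_rpow_mul_exp_mul_fract_sq_sub_third (by linarith) hX
  have hDle : ∀ t ∈ Ioi (0 : ℝ), |D t|
      ≤ 2 * p ^ 2 * ((q * t ^ (q - 1) + 2 * t ^ q / X) * exp (-t / X)) := fun t ht => by
    rw [show q - 1 = 2 * p - 3 by ring]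
    simpa only [hD_def, hG_def, hφ_def, Int.fract] using
      abs_rpow_sub_rpow_sq_mul_exp_sub_le hp hX (by exact_mod_cast Int.floor_nonneg.2 (le_of_lt ht))
        (Int.floor_le t) (Int.lt_floor_add_one t).le
  have hD : IntegrableOn D (Ioi 0) :=
    Integrable.mono' (hweight.const_mul _) (by fun_prop : Measurable D).aestronglyMeasurable
      ((ae_restrict_iff' measurableSet_Ioi).2 (ae_of_all _ hDle))
  have hsplit : (∫ t in Ioi 0, ((⌊t⌋ : ℝ) ^ p - t ^ p) ^ 2 * exp (-t / X))
      = (∫ t in Ioi 0, D t) + p ^ 2 / 3 * (∫ t in Ioi 0, φ t) + p ^ 2 * ∫ t in Ioi 0, G t := by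
    rw [← integral_const_mul, ← integral_const_mul, ← integral_add hD (hφ.const_mul _),
      ← integral_add (f := fun t => D t + p ^ 2 / 3 * φ t) (by exact hD.add (hφ.const_mul _))
        (hG.const_mul _)]
    refine setIntegral_congr_fun measurableSet_Ioi (fun t _ => ?_)
    simp only [hD_def]
    ring
  rw [hsplit, integral_Ioi_floor_rpow_mul_exp_mul_fract_sq_sub_third (by linarith) hX,
    integral_rpow_mul_exp_neg_div (by linarith) hX0, show q + 1 = 2 * p - 1 by ring, mul_zero,
    add_zero, add_sub_cancel_right]
  calc ‖∫ t in Ioi 0, D t‖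
      ≤ ∫ t in Ioi 0, 2 * p ^ 2 * ((q * t ^ (q - 1) + 2 * t ^ q / X) * exp (-t / X)) :=
        norm_integral_le_of_norm_le (hweight.const_mul _)
          ((ae_restrict_iff' measurableSet_Ioi).2 (ae_of_all _ hDle))
    _ = 6 * p ^ 2 * Gamma (2 * p - 1) * X ^ (2 * p - 2) := by
        rw [integral_const_mul, integral_rpow_sub_one_add_rpow_div_mul_exp (by linarith) hX0,
          show q + 1 = 2 * p - 1 by ring]
        ring

/-- Laplace transform of the squared sawtooth-type term. -/
theorem laplace_floor_term (k : ℕ) (hk : 3 ≤ k) :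
    ∀ ε : ℝ, 0 < ε → ∃ A : ℝ, 0 < A ∧ ∀ X : ℝ, 2 ≤ X →
      |Vk k ^ 2 * (∫ t in Set.Ioi (0 : ℝ),
            (((⌊t⌋ : ℝ)) ^ ((k : ℝ) / 2) - t ^ ((k : ℝ) / 2)) ^ 2 * Real.exp (-t / X))
          - ((k : ℝ) ^ 2 * Vk k ^ 2 * Real.Gamma ((k : ℝ) - 1) / 12) * X ^ ((k : ℝ) - 1)|
        ≤ A * X ^ ((k : ℝ) - 2 + ε) := by
  intro ε hε
  have hp : 3 / 2 ≤ (k : ℝ) / 2 := by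
    have : (3 : ℝ) ≤ k := by exact_mod_cast hk
    linarith
  have hV : 0 < Vk k := by unfold Vk; positivity
  have hΓ : 0 < Gamma ((k : ℝ) - 1) := Gamma_pos_of_pos (by linarith)
  refine ⟨Vk k ^ 2 * (6 * ((k : ℝ) / 2) ^ 2 * Gamma ((k : ℝ) - 1)), by positivity, fun X hX => ?_⟩
  have h := abs_integral_floor_rpow_sub_rpow_sq_sub_le hp (by linarith : 1 ≤ X)
  rw [show 2 * ((k : ℝ) / 2) - 1 = k - 1 by ring, show 2 * ((k : ℝ) / 2) - 2 = k - 2 by ring] at h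
  have hXε : X ^ ((k : ℝ) - 2) ≤ X ^ ((k : ℝ) - 2 + ε) :=
    rpow_le_rpow_of_exponent_le (by linarith) (by linarith)
  rw [show ∀ I : ℝ, Vk k ^ 2 * I - (k ^ 2 * Vk k ^ 2 * Gamma (k - 1) / 12) * X ^ ((k : ℝ) - 1)
      = Vk k ^ 2 * (I - ((k : ℝ) / 2) ^ 2 / 3 * (Gamma (k - 1) * X ^ ((k : ℝ) - 1))) by
    intro I; ring, abs_mul, abs_of_nonneg (sq_nonneg _), mul_assoc]
  gcongr
  exact h.trans (by gcongr)
end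

section
/- Let F : ℂ → ℂ be continuous and of polynomial growth on every vertical line, i.e. for each a ∈ ℝ there exist constants C_a, A_a > 0 with |F(a + it)| ≤ C_a (1 + |t|)^{A_a} for all t ∈ ℝ. Let c, τ, σ ∈ ℝ with σ > 1 and τ + c − σ > 0. Then there exist constants M > 0 and C > 0 such that for every s ∈ ℂ with Re s = τ, the integral (1/2π) ∫_{−∞}^{∞} F(s − σ − it) ζ(σ + it) Γ(σ + it) Γ(s + c − σ − it) / Γ(s + c) dt converges absolutely and its absolute value is at most C (1 + |Im s|)^M. -/
/-!
Write `z = σ + it` and `w = s + c - z`, so that `z + w = s + c` and the Gamma factors form the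
Beta quotient `Γ(z)Γ(w)/Γ(z + w)`. Shifting `z` by `n` through `Γ(u + n) = (u)ₙ Γ(u)` gives
`Γ(z)Γ(w)/Γ(z + w) = (z + w)ₙ B(z + n, w) / (z)ₙ`, where `B(z + n, w)` is bounded by the real Beta
integral at the real parts, `(z + w)ₙ = O((1 + |Im s|)ⁿ)` and `|(z)ₙ| ≥ ((1 + |t|)/2)ⁿ`. On
`Re z = σ > 1` the zeta factor is bounded by `ζ(σ)`, and `F(s - z)` grows at most like
`(1 + |Im s|)ᴬ (1 + |t|)ᴬ`. Taking `n ≥ A + 2` the integrand is `O((1 + |Im s|)^(A + n) / (1 + t²))`,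
which is integrable in `t`.
-/

open Complex MeasureTheory

lemma ne_neg_natCast_of_re_pos {z : ℂ} (hz : 0 < z.re) (m : ℕ) : z ≠ -m := by
  rintro rfl
  simp only [neg_re, natCast_re, Left.neg_pos_iff] at hz
  exact hz.not_ge m.cast_nonneg

lemma norm_add_natCast_le (z : ℂ) (j : ℕ) :
    ‖z + j‖ ≤ (|z.re| + j + 1) * (1 + |z.im|) := by
  have h := norm_le_abs_re_add_abs_im (z + j)
  simp only [add_re, natCast_re, add_im, natCast_im, add_zero] at h
  have := abs_add_le z.re j
  rw [Nat.abs_cast] at this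
  nlinarith [abs_nonneg z.re, abs_nonneg z.im, (Nat.cast_nonneg j : (0:ℝ) ≤ j)]

lemma norm_ascPochhammer_eval_le (z : ℂ) (n : ℕ) :
    ‖(ascPochhammer ℂ n).eval z‖ ≤ ((|z.re| + n) * (1 + |z.im|)) ^ n := by
  induction n with
  | zero => simp
  | succ n ih =>
    rw [ascPochhammer_succ_eval, norm_mul, pow_succ, Nat.cast_succ, ← add_assoc]
    gcongr
    · exact ih.trans <| pow_le_pow_left₀ (by positivity)
        (mul_le_mul_of_nonneg_right (by linarith) (by positivity)) n
    · exact norm_add_natCast_le z n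

lemma one_add_abs_im_div_two_le_norm {z : ℂ} (hz : 1 ≤ z.re) : (1 + |z.im|) / 2 ≤ ‖z‖ := by
  have h1 := abs_re_le_norm z
  have h2 := abs_im_le_norm z
  rw [abs_of_pos (by linarith)] at h1
  linarith

lemma one_add_abs_im_div_two_pow_le_norm_ascPochhammer_eval {z : ℂ} (hz : 1 ≤ z.re) (n : ℕ) :
    ((1 + |z.im|) / 2) ^ n ≤ ‖(ascPochhammer ℂ n).eval z‖ := by
  induction n with
  | zero => simp
  | succ n ih =>
    rw [ascPochhammer_succ_eval, norm_mul, pow_succ]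
    gcongr
    simpa using one_add_abs_im_div_two_le_norm (z := z + n)
      (by simpa using le_add_of_le_of_nonneg hz n.cast_nonneg)

lemma Gamma_mul_Gamma_div_Gamma_add_eq {z w : ℂ} (hz : 0 < z.re) (hw : 0 < w.re) (n : ℕ) :
    Gamma z * Gamma w / Gamma (z + w) =
      (ascPochhammer ℂ n).eval (z + w) * betaIntegral (z + n) w / (ascPochhammer ℂ n).eval z := by
  have hzw : 0 < (z + w).re := by simp only [add_re]; linarith
  have hshift : ∀ u : ℂ, 0 < u.re → Gamma (u + n) = (ascPochhammer ℂ n).eval u * Gamma u :=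
    fun u hu => by
      rw [← Gamma_add_nat_div_Gamma_eq u (ne_neg_natCast_of_re_pos hu),
        div_mul_cancel₀ _ (Gamma_ne_zero_of_re_pos hu)]
  have hP : (ascPochhammer ℂ n).eval z ≠ 0 := by
    refine right_ne_zero_of_mul (a := Gamma z) ?_
    rw [mul_comm, ← hshift z hz]
    exact Gamma_ne_zero_of_re_pos (by simp only [add_re, natCast_re]; positivity)
  rw [div_eq_div_iff (Gamma_ne_zero_of_re_pos hzw) hP]
  calc Gamma z * Gamma w * (ascPochhammer ℂ n).eval z = Gamma (z + n) * Gamma w := by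
        rw [hshift z hz]; ring
    _ = Gamma (z + w + n) * betaIntegral (z + n) w := by
        rw [Gamma_mul_Gamma_eq_betaIntegral (by simp only [add_re, natCast_re]; positivity) hw,
          add_right_comm]
    _ = _ := by rw [hshift _ hzw]; ring

lemma norm_betaIntegral_le (u v : ℂ) :
    ‖betaIntegral u v‖ ≤ ∫ x in (0:ℝ)..1, x ^ (u.re - 1) * (1 - x) ^ (v.re - 1) := by
  rw [betaIntegral]
  refine (intervalIntegral.norm_integral_le_integral_norm zero_le_one).trans_eq ?_
  refine intervalIntegral.integral_congr_ae ?_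
  have hne : ∀ᵐ x : ℝ, x ≠ 1 := by simp [ae_iff, measure_singleton]
  filter_upwards [hne] with x hx hxI
  rw [Set.uIoc_of_le zero_le_one] at hxI
  have hx1 : 0 < 1 - x := sub_pos.2 (lt_of_le_of_ne hxI.2 hx)
  rw [norm_mul, norm_cpow_eq_rpow_re_of_pos hxI.1, ← ofReal_one, ← ofReal_sub,
    norm_cpow_eq_rpow_re_of_pos hx1]
  simp

lemma exists_norm_Gamma_mul_Gamma_div_Gamma_add_le (n : ℕ) {a b : ℝ} (ha : 1 ≤ a) (hb : 0 < b) :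
    ∃ B, 0 ≤ B ∧ ∀ z w : ℂ, z.re = a → w.re = b →
      ‖Gamma z * Gamma w / Gamma (z + w)‖ ≤ B * (1 + |(z + w).im|) ^ n / (1 + |z.im|) ^ n := by
  set β := ∫ x in (0:ℝ)..1, x ^ (a + n - 1) * (1 - x) ^ (b - 1)
  have hβ : 0 ≤ β := intervalIntegral.integral_nonneg zero_le_one fun x hx =>
    mul_nonneg (Real.rpow_nonneg hx.1 _) (Real.rpow_nonneg (sub_nonneg.2 hx.2) _)
  refine ⟨(2 * (|a + b| + n)) ^ n * β, by positivity, fun z w hz hw => ?_⟩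
  have hzw : (z + w).re = a + b := by simp [hz, hw]
  rw [Gamma_mul_Gamma_div_Gamma_add_eq (by linarith) (by linarith) n, norm_div, norm_mul]
  calc _ ≤ ((|a + b| + n) * (1 + |(z + w).im|)) ^ n * β / ((1 + |z.im|) / 2) ^ n := by
        gcongr
        · simpa only [hzw] using norm_ascPochhammer_eval_le (z + w) n
        · simpa [hz, hw] using norm_betaIntegral_le (z + n) w
        · exact one_add_abs_im_div_two_pow_le_norm_ascPochhammer_eval (hz ▸ ha) n
    _ = _ := by rw [mul_pow, mul_pow, div_pow]; field_simp

lemma norm_riemannZeta_le_tsum {s : ℂ} (hs : 1 < s.re) :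
    ‖riemannZeta s‖ ≤ ∑' n : ℕ, 1 / (n : ℝ) ^ s.re := by
  have hnorm : ∀ n : ℕ, ‖1 / (n : ℂ) ^ s‖ = 1 / (n : ℝ) ^ s.re := fun n => by
    rw [norm_div, norm_one, norm_natCast_cpow_of_re_ne_zero n (by linarith)]
  rw [zeta_eq_tsum_one_div_nat_cpow hs]
  refine (norm_tsum_le_tsum_norm ?_).trans_eq (tsum_congr hnorm)
  simpa only [hnorm] using Real.summable_one_div_nat_rpow.2 hs

lemma one_add_abs_sub_rpow_le {A : ℝ} (hA : 0 ≤ A) (x y : ℝ) :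
    (1 + |x - y|) ^ A ≤ (1 + |x|) ^ A * (1 + |y|) ^ A := by
  rw [← Real.mul_rpow (by positivity) (by positivity)]
  gcongr
  nlinarith [abs_sub x y, abs_nonneg x, abs_nonneg y]

lemma rpow_div_pow_le_inv_one_add_sq {A : ℝ} {n : ℕ} (hn : A + 2 ≤ n) (t : ℝ) :
    (1 + |t|) ^ A / (1 + |t|) ^ n ≤ (1 + t ^ 2)⁻¹ := by
  have ht : 0 < 1 + |t| := by positivity
  rw [← Real.rpow_natCast, ← Real.rpow_sub ht, ← neg_sub, Real.rpow_neg ht.le]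
  refine inv_anti₀ (by positivity) ?_
  calc 1 + t ^ 2 ≤ (1 + |t|) ^ (2 : ℝ) := by
        rw [Real.rpow_two]; nlinarith [abs_nonneg t, sq_abs t]
    _ ≤ (1 + |t|) ^ ((n : ℝ) - A) :=
        Real.rpow_le_rpow_of_exponent_le (by linarith [abs_nonneg t]) (by linarith)

lemma integrable_and_norm_integral_le_of_norm_le_inv_one_add_sq {E : Type*}
    [NormedAddCommGroup E] [NormedSpace ℝ E] {f : ℝ → E} (hf : AEStronglyMeasurable f) {B : ℝ}
    (hB : ∀ t, ‖f t‖ ≤ B * (1 + t ^ 2)⁻¹) :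
    Integrable f ∧ ‖∫ t, f t‖ ≤ B * Real.pi := by
  have hg := integrable_inv_one_add_sq.const_mul B
  refine ⟨hg.mono' hf (ae_of_all _ hB), ?_⟩
  refine (norm_integral_le_of_norm_le hg (ae_of_all _ hB)).trans_eq ?_
  rw [integral_const_mul, integral_univ_inv_one_add_sq]

noncomputable def mellinBarnesIntegrand (F : ℂ → ℂ) (c σ : ℝ) (s : ℂ) (t : ℝ) : ℂ :=
  F (s - σ - t * I) * riemannZeta (σ + t * I) * Gamma (σ + t * I) * Gamma (s + c - σ - t * I)
    / Gamma (s + c)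

lemma continuous_mellinBarnesIntegrand {F : ℂ → ℂ} (hF : Continuous F) {c σ : ℝ} (hσ : 1 < σ)
    {s : ℂ} (hs : σ < s.re + c) : Continuous (mellinBarnesIntegrand F c σ s) := by
  have hζ : Continuous fun t : ℝ => riemannZeta (σ + t * I) :=
    continuous_iff_continuousAt.2 fun t => ContinuousAt.comp
      (differentiableAt_riemannZeta fun h => by simpa [hσ.ne'] using congrArg re h).continuousAt
      (by fun_prop)
  have hΓ₁ : Continuous fun t : ℝ => Gamma (σ + t * I) :=
    continuous_iff_continuousAt.2 fun t => ContinuousAt.comp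
      (continuousAt_Gamma _ (ne_neg_natCast_of_re_pos (by simpa using zero_lt_one.trans hσ)))
      (by fun_prop)
  have hΓ₂ : Continuous fun t : ℝ => Gamma (s + c - σ - t * I) :=
    continuous_iff_continuousAt.2 fun t => ContinuousAt.comp
      (continuousAt_Gamma _ (ne_neg_natCast_of_re_pos (by simpa using hs))) (by fun_prop)
  unfold mellinBarnesIntegrand
  fun_prop

lemma exists_norm_mellinBarnesIntegrand_le {F : ℂ → ℂ} {c τ σ C₁ A : ℝ} (hA : 0 ≤ A)
    (hF : ∀ t : ℝ, ‖F ((τ - σ : ℝ) + t * I)‖ ≤ C₁ * (1 + |t|) ^ A) (hσ : 1 < σ)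
    (hτ : 0 < τ + c - σ) :
    ∃ M : ℝ, 0 < M ∧ ∃ K : ℝ, 0 < K ∧ ∀ s : ℂ, s.re = τ → ∀ t : ℝ,
      ‖mellinBarnesIntegrand F c σ s t‖ ≤ K * (1 + |s.im|) ^ M * (1 + t ^ 2)⁻¹ := by
  have hC₁ : 0 ≤ C₁ := by simpa using (norm_nonneg _).trans (hF 0)
  obtain ⟨n, hn⟩ : ∃ n : ℕ, A + 2 ≤ n := ⟨⌈A⌉₊ + 2, by push_cast; linarith [Nat.le_ceil A]⟩
  obtain ⟨B, hB, hΓ⟩ := exists_norm_Gamma_mul_Gamma_div_Gamma_add_le n hσ.le hτ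
  set Z := ∑' m : ℕ, 1 / (m : ℝ) ^ σ
  have hZ : 0 ≤ Z := tsum_nonneg fun m => by positivity
  refine ⟨A + n, by linarith, C₁ * Z * B + 1, by positivity, fun s hs t => ?_⟩
  have hFt : ‖F (s - σ - t * I)‖ ≤ C₁ * ((1 + |s.im|) ^ A * (1 + |t|) ^ A) := by
    have : s - σ - t * I = ((τ - σ : ℝ) : ℂ) + ((s.im - t : ℝ) : ℂ) * I := by
      apply Complex.ext <;> simp [hs]
    rw [this]
    exact (hF _).trans (by gcongr; exact one_add_abs_sub_rpow_le hA _ _)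
  have hζt : ‖riemannZeta (σ + t * I)‖ ≤ Z := by
    have := norm_riemannZeta_le_tsum (s := σ + t * I) (by simpa using hσ)
    rwa [show ((σ : ℂ) + t * I).re = σ by simp] at this
  have hΓt : ‖Gamma (σ + t * I) * Gamma (s + c - σ - t * I) / Gamma (s + c)‖ ≤
      B * (1 + |s.im|) ^ n / (1 + |t|) ^ n := by
    have := hΓ (σ + t * I) (s + c - σ - t * I) (by simp) (by simp [hs])
    simpa [show (σ : ℂ) + t * I + (s + c - σ - t * I) = s + c by ring] using this
  calc ‖mellinBarnesIntegrand F c σ s t‖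
      = ‖F (s - σ - t * I)‖ * ‖riemannZeta (σ + t * I)‖ *
          ‖Gamma (σ + t * I) * Gamma (s + c - σ - t * I) / Gamma (s + c)‖ := by
        rw [mellinBarnesIntegrand, ← norm_mul, ← norm_mul]
        congr 1
        ring
    _ ≤ C₁ * ((1 + |s.im|) ^ A * (1 + |t|) ^ A) * Z * (B * (1 + |s.im|) ^ n / (1 + |t|) ^ n) := by
        gcongr
    _ = C₁ * Z * B * (1 + |s.im|) ^ (A + n) * ((1 + |t|) ^ A / (1 + |t|) ^ n) := by
        rw [Real.rpow_add (by positivity), Real.rpow_natCast]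
        ring
    _ ≤ (C₁ * Z * B + 1) * (1 + |s.im|) ^ (A + n) * (1 + t ^ 2)⁻¹ := by
        gcongr
        · linarith
        · exact rpow_div_pow_le_inv_one_add_sq hn t

/-- polynomial growth of the Mellin–Barnes-type integral
`(1/2πi)∫_{(σ)} F(s − z) ζ(z) Γ(z) Γ(s + c − z)/Γ(s + c) dz` on the vertical line
`Re s = τ`, given that `F` is continuous and of polynomial growth on vertical lines. -/
theorem mellin_barnes_polynomial_growth (F : ℂ → ℂ) (hF : Continuous F)
    (hFpoly : ∀ a : ℝ, ∃ C : ℝ, 0 < C ∧ ∃ A : ℝ, 0 < A ∧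
      ∀ t : ℝ, ‖F ((a : ℂ) + t * Complex.I)‖ ≤ C * (1 + |t|) ^ A)
    (c τ σ : ℝ) (hσ : 1 < σ) (hτ : 0 < τ + c - σ) :
    ∃ M : ℝ, 0 < M ∧ ∃ C : ℝ, 0 < C ∧ ∀ s : ℂ, s.re = τ →
      Integrable (fun t : ℝ =>
        F (s - (σ : ℂ) - t * Complex.I) * riemannZeta ((σ : ℂ) + t * Complex.I)
          * Complex.Gamma ((σ : ℂ) + t * Complex.I)
          * Complex.Gamma (s + (c : ℂ) - (σ : ℂ) - t * Complex.I)
          / Complex.Gamma (s + (c : ℂ))) ∧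
      ‖(1 / (2 * (Real.pi : ℂ))) * ∫ t : ℝ,
          F (s - (σ : ℂ) - t * Complex.I) * riemannZeta ((σ : ℂ) + t * Complex.I)
            * Complex.Gamma ((σ : ℂ) + t * Complex.I)
            * Complex.Gamma (s + (c : ℂ) - (σ : ℂ) - t * Complex.I)
            / Complex.Gamma (s + (c : ℂ))‖
        ≤ C * (1 + |s.im|) ^ M := by
  obtain ⟨_, -, A, hA, hF₀⟩ := hFpoly (τ - σ)
  obtain ⟨M, hM, K, hK, hbound⟩ := exists_norm_mellinBarnesIntegrand_le hA.le hF₀ hσ hτ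
  refine ⟨M, hM, K / 2, by positivity, fun s hs => ?_⟩
  obtain ⟨hint, hle⟩ := integrable_and_norm_integral_le_of_norm_le_inv_one_add_sq
    (continuous_mellinBarnesIntegrand hF hσ (by linarith)).aestronglyMeasurable (hbound s hs)
  refine ⟨hint, ?_⟩
  have h2π : ‖1 / (2 * (Real.pi : ℂ))‖ = (2 * Real.pi)⁻¹ := by
    simp [abs_of_pos Real.pi_pos]
  calc _ = (2 * Real.pi)⁻¹ * ‖∫ t, mellinBarnesIntegrand F c σ s t‖ := by
        rw [norm_mul, h2π]
        rfl
    _ ≤ (2 * Real.pi)⁻¹ * (K * (1 + |s.im|) ^ M * Real.pi) := by gcongr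
    _ = K / 2 * (1 + |s.im|) ^ M := by field_simp
end
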